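/- arXiv:1802.08234 — 6 statements merged into one kernel-verified Lean document; each statement's English description precedes it below -/
import Mathlib

section
/- Let α be a type, S a nonempty finite subset of α, and δ : α → ℝ a sub-distribution satisfying the probabilistic-polyhedron bounds (S; s_min, s_max; p_min, p_max; m_min, m_max) with 0 ≤ p_min ≤ p_max. Let p_L, p_U be real numbers such that p_L ≤ |supp δ| / |S| ≤ p_U. Define s_min⁺ = p_L · |S|, s_max⁺ = p_U · |S|, m_min⁺ = max(m_min, p_min · s_min⁺), and m_max⁺ = min(m_max, p_max · s_max⁺). Then δ satisfies the probabilistic-polyhedron bounds (S; s_min⁺, s_max⁺; p_min, p_max; m_min⁺, m_max⁺). -/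
/-- A sub-distribution on a type `α`: a nonnegative real-valued function whose
support `{σ | 0 < δ σ}` is finite. -/
structure SubDist (α : Type*) where
  f : α → ℝ
  nonneg : ∀ σ, 0 ≤ f σ
  fin : {σ | 0 < f σ}.Finite

/-- The support of a sub-distribution, as a finset. -/
noncomputable def SubDist.supp {α : Type*} (δ : SubDist α) : Finset α :=
  δ.fin.toFinset

/-- The mass `‖δ‖` of a sub-distribution: the sum of `δ σ` over the support. -/
noncomputable def SubDist.mass {α : Type*} (δ : SubDist α) : ℝ :=
  ∑ σ ∈ δ.supp, δ.f σ

/-- `δ` satisfies the probabilistic-polyhedron bounds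
`(S; smin, smax; pmin, pmax; mmin, mmax)`. -/
def PPBounds {α : Type*} (δ : SubDist α) (S : Finset α)
    (smin smax pmin pmax mmin mmax : ℝ) : Prop :=
  δ.supp ⊆ S ∧
  (smin ≤ (δ.supp.card : ℝ) ∧ (δ.supp.card : ℝ) ≤ smax) ∧
  (mmin ≤ δ.mass ∧ δ.mass ≤ mmax) ∧
  (∀ σ ∈ δ.supp, pmin ≤ δ.f σ ∧ δ.f σ ≤ pmax)

/-- sampling revision is sound. If the credible interval
`[pL, pU]` really contains the fraction `|supp δ| / |S|`, then the
sampling-revised probabilistic polyhedron still abstracts `δ`. -/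
theorem sampling_sound {α : Type*} (δ : SubDist α) (S : Finset α)
    (hS : S.Nonempty)
    (smin smax pmin pmax mmin mmax pL pU : ℝ)
    (hpmin : 0 ≤ pmin) (hpp : pmin ≤ pmax)
    (hPP : PPBounds δ S smin smax pmin pmax mmin mmax)
    (hL : pL ≤ (δ.supp.card : ℝ) / (S.card : ℝ))
    (hU : (δ.supp.card : ℝ) / (S.card : ℝ) ≤ pU) :
    PPBounds δ S (pL * (S.card : ℝ)) (pU * (S.card : ℝ)) pmin pmax
      (max mmin (pmin * (pL * (S.card : ℝ))))
      (min mmax (pmax * (pU * (S.card : ℝ)))) := by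
  obtain ⟨hsub, ⟨hs1, hs2⟩, ⟨hm1, hm2⟩, hp⟩ := hPP
  have hcard : (0:ℝ) < (S.card : ℝ) := by
    exact_mod_cast Finset.card_pos.mpr hS
  have hcL : pL * (S.card : ℝ) ≤ (δ.supp.card : ℝ) := by
    have := mul_le_mul_of_nonneg_right hL hcard.le
    rwa [div_mul_cancel₀ _ hcard.ne'] at this
  have hcU : (δ.supp.card : ℝ) ≤ pU * (S.card : ℝ) := by
    have := mul_le_mul_of_nonneg_right hU hcard.le
    rwa [div_mul_cancel₀ _ hcard.ne'] at this
  have hmlow : pmin * (δ.supp.card : ℝ) ≤ δ.mass := by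
    rw [SubDist.mass]
    calc pmin * (δ.supp.card : ℝ) = ∑ _σ ∈ δ.supp, pmin := by
          rw [Finset.sum_const, nsmul_eq_mul, mul_comm]
      _ ≤ ∑ σ ∈ δ.supp, δ.f σ := Finset.sum_le_sum (fun σ hσ => (hp σ hσ).1)
  have hmhigh : δ.mass ≤ pmax * (δ.supp.card : ℝ) := by
    rw [SubDist.mass]
    calc ∑ σ ∈ δ.supp, δ.f σ ≤ ∑ _σ ∈ δ.supp, pmax :=
          Finset.sum_le_sum (fun σ hσ => (hp σ hσ).2)
      _ = pmax * (δ.supp.card : ℝ) := by rw [Finset.sum_const, nsmul_eq_mul, mul_comm]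
  refine ⟨hsub, ⟨hcL, hcU⟩, ⟨?_, ?_⟩, hp⟩
  · exact max_le hm1 (le_trans (mul_le_mul_of_nonneg_left hcL hpmin) hmlow)
  · exact le_min hm2 (le_trans hmhigh (mul_le_mul_of_nonneg_left hcU (hpmin.trans hpp)))
end

section
/- Let α be a type, S a finite subset of α, and δ : α → ℝ a sub-distribution satisfying the probabilistic-polyhedron bounds (S; s_min, s_max; p_min, p_max; m_min, m_max) with 0 ≤ p_min. Let U be a finite subset of α with U ⊆ supp δ. Define s_min⁺ = max(s_min, |U|) and m_min⁺ = max(m_min, p_min · |U|). Then δ satisfies the probabilistic-polyhedron bounds (S; s_min⁺, s_max; p_min, p_max; m_min⁺, m_max). -/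
/-- concolic revision is sound. If `U` is a finite
under-approximation of the support of `δ`, then revising the size lower
bound to `|U|` and the mass lower bound to `pmin · |U|` remains sound. -/
theorem concolic_sound {α : Type*} (δ : SubDist α) (S : Finset α)
    (smin smax pmin pmax mmin mmax : ℝ) (hpmin : 0 ≤ pmin)
    (hPP : PPBounds δ S smin smax pmin pmax mmin mmax)
    (U : Finset α) (hU : U ⊆ δ.supp) :
    PPBounds δ S (max smin (U.card : ℝ)) smax pmin pmax
      (max mmin (pmin * (U.card : ℝ))) mmax := by
  obtain ⟨hS, ⟨hs1, hs2⟩, ⟨hm1, hm2⟩, hp⟩ := hPP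
  refine ⟨hS, ⟨max_le hs1 ?_, hs2⟩, ⟨max_le hm1 ?_, hm2⟩, hp⟩
  · exact_mod_cast Finset.card_le_card hU
  · calc pmin * (U.card : ℝ) = ∑ _σ ∈ U, pmin := by
          rw [Finset.sum_const, nsmul_eq_mul, mul_comm]
      _ ≤ ∑ σ ∈ U, δ.f σ := Finset.sum_le_sum fun σ hσ => (hp σ (hU hσ)).1
      _ ≤ δ.mass := Finset.sum_le_sum_of_subset_of_nonneg hU
          (fun σ _ _ => δ.nonneg σ)
end

section
/- Let α be a type, S a finite subset of α, and δ : α → ℝ a sub-distribution satisfying the probabilistic-polyhedron bounds (S; s_min, s_max; p_min, p_max; m_min, m_max) with 0 ≤ p_min ≤ p_max. Let U ⊆ supp δ be a set with |U| < |S|, and let p_L, p_U be real numbers such that p_L ≤ |supp δ ∩ (S \ U)| / (|S| − |U|) ≤ p_U. Define s_min⁺ = p_L · (|S| − |U|) + |U|, s_max⁺ = p_U · (|S| − |U|) + |U|, m_min⁺ = max(m_min, p_min · s_min⁺), and m_max⁺ = min(m_max, p_max · s_max⁺). Then δ satisfies the probabilistic-polyhedron bounds (S; s_min⁺, s_max⁺;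 p_min, p_max; m_min⁺, m_max⁺). -/
/-- combining concolic execution with sampling is sound. -/
theorem concolic_sampling_sound {α : Type*} [DecidableEq α]
    (δ : SubDist α) (S : Finset α)
    (smin smax pmin pmax mmin mmax pL pU : ℝ)
    (hpmin : 0 ≤ pmin) (hpp : pmin ≤ pmax)
    (hPP : PPBounds δ S smin smax pmin pmax mmin mmax)
    (U : Finset α) (hU : U ⊆ δ.supp) (hcard : U.card < S.card)
    (hL : pL ≤ ((δ.supp ∩ (S \ U)).card : ℝ) / ((S.card : ℝ) - (U.card : ℝ)))
    (hUb : ((δ.supp ∩ (S \ U)).card : ℝ) / ((S.card : ℝ) - (U.card : ℝ)) ≤ pU) :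
    PPBounds δ S
      (pL * ((S.card : ℝ) - (U.card : ℝ)) + (U.card : ℝ))
      (pU * ((S.card : ℝ) - (U.card : ℝ)) + (U.card : ℝ))
      pmin pmax
      (max mmin (pmin * (pL * ((S.card : ℝ) - (U.card : ℝ)) + (U.card : ℝ))))
      (min mmax (pmax * (pU * ((S.card : ℝ) - (U.card : ℝ)) + (U.card : ℝ)))) := by
  obtain ⟨hsub, _, ⟨hm1, hm2⟩, hp⟩ := hPP
  have hinter : δ.supp ∩ (S \ U) = δ.supp \ U := by
    ext x
    simp only [Finset.mem_inter, Finset.mem_sdiff]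
    exact ⟨fun ⟨h1, _, h3⟩ => ⟨h1, h3⟩, fun ⟨h1, h3⟩ => ⟨h1, hsub h1, h3⟩⟩
  have hcardsplit : ((δ.supp ∩ (S \ U)).card : ℝ) + (U.card : ℝ) = (δ.supp.card : ℝ) := by
    rw [hinter]
    rw [← Nat.cast_add, Finset.card_sdiff_add_card_eq_card hU]
  have hn : (0:ℝ) < (S.card : ℝ) - (U.card : ℝ) := by
    have h := (Nat.cast_lt (α := ℝ)).mpr hcard
    linarith
  have hLc : pL * ((S.card : ℝ) - (U.card : ℝ)) ≤ ((δ.supp ∩ (S \ U)).card : ℝ) := by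
    rw [div_le_iff₀ hn] at hUb
    rw [le_div_iff₀ hn] at hL
    linarith
  have hUc : ((δ.supp ∩ (S \ U)).card : ℝ) ≤ pU * ((S.card : ℝ) - (U.card : ℝ)) := by
    rw [div_le_iff₀ hn] at hUb
    linarith
  have hs1 : pL * ((S.card : ℝ) - (U.card : ℝ)) + (U.card : ℝ) ≤ (δ.supp.card : ℝ) := by
    linarith
  have hs2 : (δ.supp.card : ℝ) ≤ pU * ((S.card : ℝ) - (U.card : ℝ)) + (U.card : ℝ) := by
    linarith
  have hmassl : pmin * (δ.supp.card : ℝ) ≤ δ.mass := by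
    unfold SubDist.mass
    calc pmin * (δ.supp.card : ℝ) = ∑ _σ ∈ δ.supp, pmin := by
          rw [Finset.sum_const, nsmul_eq_mul, mul_comm]
      _ ≤ ∑ σ ∈ δ.supp, δ.f σ := Finset.sum_le_sum (fun σ hσ => (hp σ hσ).1)
  have hmassu : δ.mass ≤ pmax * (δ.supp.card : ℝ) := by
    unfold SubDist.mass
    calc ∑ σ ∈ δ.supp, δ.f σ ≤ ∑ _σ ∈ δ.supp, pmax :=
          Finset.sum_le_sum (fun σ hσ => (hp σ hσ).2)
      _ = pmax * (δ.supp.card : ℝ) := by rw [Finset.sum_const, nsmul_eq_mul, mul_comm]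
  have hpmax : (0:ℝ) ≤ pmax := le_trans hpmin hpp
  refine ⟨hsub, ⟨hs1, hs2⟩, ⟨?_, ?_⟩, hp⟩
  · apply max_le hm1
    calc pmin * (pL * ((S.card : ℝ) - (U.card : ℝ)) + (U.card : ℝ))
        ≤ pmin * (δ.supp.card : ℝ) := by nlinarith
      _ ≤ δ.mass := hmassl
  · apply le_min hm2
    calc δ.mass ≤ pmax * (δ.supp.card : ℝ) := hmassu
      _ ≤ pmax * (pU * ((S.card : ℝ) - (U.card : ℝ)) + (U.card : ℝ)) := by nlinarith
end

section
/- Let α be a type, S a finite subset of α, p a real number, and δ : α → ℝ a sub-distribution satisfying the probabilistic-polyhedron bounds (S; s_min, s_max; p_min, p_max; m_min, m_max) with s_min = s_max = |S| and p_min = p_max = p. Then supp δ = S, δ σ = p for every σ ∈ S, δ σ = 0 for every σ ∉ S, and ‖δ‖ = p · |S|. In particular, δ is the unique uniform sub-distribution that assigns probability p to each state of S, so the set of sub-distributions satisfying these bounds is a singleton. -/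
theorem pp_key {α : Type*} (δ : SubDist α) (S : Finset α)
    (p mmin mmax : ℝ)
    (hPP : PPBounds δ S (S.card : ℝ) (S.card : ℝ) p p mmin mmax) :
    δ.supp = S ∧ (∀ σ ∈ S, δ.f σ = p) ∧ (∀ σ ∉ S, δ.f σ = 0) ∧
      δ.mass = p * (S.card : ℝ) := by
  obtain ⟨hsub, ⟨hc1, hc2⟩, _, hp⟩ := hPP
  have hcard : δ.supp.card = S.card := by exact_mod_cast le_antisymm hc2 hc1
  have hsupp : δ.supp = S := Finset.eq_of_subset_of_card_le hsub hcard.ge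
  refine ⟨hsupp, ?_, ?_, ?_⟩
  · intro σ hσ
    have := hp σ (hsupp ▸ hσ)
    linarith [this.1, this.2]
  · intro σ hσ
    by_contra h
    have h0 : 0 < δ.f σ := lt_of_le_of_ne (δ.nonneg σ) (Ne.symm h)
    exact hσ (hsub (by simp [SubDist.supp, h0]))
  · have : δ.mass = ∑ σ ∈ S, δ.f σ := by rw [SubDist.mass, hsupp]
    rw [this]
    rw [Finset.sum_congr rfl (fun σ hσ => ?_)]
    · rw [Finset.sum_const, nsmul_eq_mul, mul_comm]
    · have := hp σ (hsupp ▸ hσ)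
      linarith [this.1, this.2]

/-- when the size bounds equal `|S|` and the per-point
probability bounds coincide at `p`, the concretization is the singleton
containing only the uniform sub-distribution assigning `p` to each state
of `S`. -/
theorem concretization_singleton {α : Type*} (δ : SubDist α) (S : Finset α)
    (p mmin mmax : ℝ)
    (hPP : PPBounds δ S (S.card : ℝ) (S.card : ℝ) p p mmin mmax) :
    δ.supp = S ∧ (∀ σ ∈ S, δ.f σ = p) ∧ (∀ σ ∉ S, δ.f σ = 0) ∧
      δ.mass = p * (S.card : ℝ) ∧
      ∀ δ' : SubDist α,
        PPBounds δ' S (S.card : ℝ) (S.card : ℝ) p p mmin mmax →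
          δ'.f = δ.f := by
  obtain ⟨h1, h2, h3, h4⟩ := pp_key δ S p mmin mmax hPP
  refine ⟨h1, h2, h3, h4, fun δ' hPP' => ?_⟩
  obtain ⟨_, h2', h3', _⟩ := pp_key δ' S p mmin mmax hPP'
  funext σ
  by_cases hσ : σ ∈ S
  · rw [h2' σ hσ, h2 σ hσ]
  · rw [h3' σ hσ, h3 σ hσ]
end

section
/- Let α be a type, S a nonempty finite subset of α, and δ : α → ℝ a sub-distribution satisfying the probabilistic-polyhedron bounds (S; s_min, s_max; p_min, p_max; m_min, m_max) with 0 ≤ p_min. Let p_L be a real number with p_L ≤ |supp δ| / |S|, and suppose m_min⁺ := max(m_min, p_min · p_L · |S|) > 0. Then for every σ ∈ α, δ σ / ‖δ‖ ≤ p_max / m_min⁺; that is, the Bayes vulnerability of the normalized distribution δ / ‖δ‖ is at most p_max / max(m_min, p_min · p_L · |S|). -/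
/-- the vulnerability estimate computed from the
sampling-revised probabilistic polyhedron is a sound upper bound. -/
theorem sampling_vulnerability_bound {α : Type*} (δ : SubDist α)
    (S : Finset α) (hS : S.Nonempty)
    (smin smax pmin pmax mmin mmax pL : ℝ) (hpmin : 0 ≤ pmin)
    (hPP : PPBounds δ S smin smax pmin pmax mmin mmax)
    (hL : pL ≤ (δ.supp.card : ℝ) / (S.card : ℝ))
    (hm : 0 < max mmin (pmin * pL * (S.card : ℝ))) :
    ∀ σ, δ.f σ / δ.mass ≤ pmax / max mmin (pmin * pL * (S.card : ℝ)) := by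
  obtain ⟨hsub, hcard, ⟨hm1, hm2⟩, hp⟩ := hPP
  have hScard : (0 : ℝ) < (S.card : ℝ) := by
    exact_mod_cast Finset.card_pos.mpr hS
  -- pmin * pL * |S| ≤ pmin * |supp|
  have h1 : pmin * pL * (S.card : ℝ) ≤ pmin * (δ.supp.card : ℝ) := by
    have := mul_le_mul_of_nonneg_left hL hpmin
    calc pmin * pL * (S.card : ℝ) ≤ pmin * ((δ.supp.card : ℝ) / (S.card : ℝ)) * (S.card : ℝ) := by
          exact mul_le_mul_of_nonneg_right this hScard.le
      _ = pmin * (δ.supp.card : ℝ) := by field_simp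
  -- pmin * |supp| ≤ mass
  have h2 : pmin * (δ.supp.card : ℝ) ≤ δ.mass := by
    rw [SubDist.mass]
    calc pmin * (δ.supp.card : ℝ) = ∑ _σ ∈ δ.supp, pmin := by
          rw [Finset.sum_const, nsmul_eq_mul, mul_comm]
      _ ≤ ∑ σ ∈ δ.supp, δ.f σ := Finset.sum_le_sum fun σ hσ => (hp σ hσ).1
  have hmax : max mmin (pmin * pL * (S.card : ℝ)) ≤ δ.mass :=
    max_le hm1 (h1.trans h2)
  have hmass : 0 < δ.mass := lt_of_lt_of_le hm hmax
  -- support is nonempty, so pmax > 0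
  have hsupp : δ.supp.Nonempty := by
    by_contra h
    rw [Finset.not_nonempty_iff_eq_empty] at h
    have : δ.mass = 0 := by rw [SubDist.mass, h, Finset.sum_empty]
    linarith
  obtain ⟨τ, hτ⟩ := hsupp
  have hτpos : 0 < δ.f τ := by
    have := δ.fin.mem_toFinset.mp hτ
    exact this
  have hpmax : 0 < pmax := lt_of_lt_of_le hτpos (hp τ hτ).2
  intro σ
  by_cases hσ : σ ∈ δ.supp
  · exact div_le_div₀ hpmax.le (hp σ hσ).2 hm hmax
  · have : δ.f σ = 0 := by
      by_contra h
      exact hσ (δ.fin.mem_toFinset.mpr (lt_of_le_of_ne (δ.nonneg σ) (Ne.symm h)))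
    rw [this, zero_div]
    positivity
end

section
/- Let α be a type, S a finite subset of α, and δ : α → ℝ a sub-distribution satisfying the probabilistic-polyhedron bounds (S; s_min, s_max; p_min, p_max; m_min, m_max) with 0 ≤ p_min. Let U be a finite subset of α with U ⊆ supp δ, and suppose m_min⁺ := max(m_min, p_min · |U|) > 0. Then for every σ ∈ α, δ σ / ‖δ‖ ≤ p_max / m_min⁺; that is, the Bayes vulnerability of the normalized distribution δ / ‖δ‖ is at most p_max / max(m_min, p_min · |U|). -/
/-- the vulnerability estimate computed from the
concolically-revised probabilistic polyhedron is a sound upper bound. -/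
theorem concolic_vulnerability_bound {α : Type*} (δ : SubDist α)
    (S : Finset α)
    (smin smax pmin pmax mmin mmax : ℝ) (hpmin : 0 ≤ pmin)
    (hPP : PPBounds δ S smin smax pmin pmax mmin mmax)
    (U : Finset α) (hU : U ⊆ δ.supp)
    (hm : 0 < max mmin (pmin * (U.card : ℝ))) :
    ∀ σ, δ.f σ / δ.mass ≤ pmax / max mmin (pmin * (U.card : ℝ)) := by
  obtain ⟨hS, hcard, ⟨hm1, hm2⟩, hp⟩ := hPP
  -- mass ≥ pmin * |U|
  have hmassU : pmin * (U.card : ℝ) ≤ δ.mass := by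
    calc pmin * (U.card : ℝ) = ∑ σ ∈ U, pmin := by
          rw [Finset.sum_const, nsmul_eq_mul, mul_comm]
      _ ≤ ∑ σ ∈ U, δ.f σ := Finset.sum_le_sum fun σ hσ => (hp σ (hU hσ)).1
      _ ≤ ∑ σ ∈ δ.supp, δ.f σ :=
          Finset.sum_le_sum_of_subset_of_nonneg hU (fun σ _ _ => δ.nonneg σ)
      _ = δ.mass := rfl
  have hmass : max mmin (pmin * (U.card : ℝ)) ≤ δ.mass := max_le hm1 hmassU
  have hmasspos : 0 < δ.mass := lt_of_lt_of_le hm hmass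
  -- support nonempty, so pmax ≥ 0
  have hsupp : δ.supp.Nonempty := by
    by_contra h
    rw [Finset.not_nonempty_iff_eq_empty] at h
    simp [SubDist.mass, h] at hmasspos
  obtain ⟨σ₀, hσ₀⟩ := hsupp
  have hpmax : 0 ≤ pmax := by
    have := (hp σ₀ hσ₀).2
    have h0 : 0 < δ.f σ₀ := (δ.fin.mem_toFinset.mp hσ₀)
    linarith
  intro σ
  have hfσ : δ.f σ ≤ pmax := by
    by_cases h : σ ∈ δ.supp
    · exact (hp σ h).2
    · have : ¬ 0 < δ.f σ := fun h' => h (δ.fin.mem_toFinset.mpr h')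
      linarith [δ.nonneg σ]
  exact div_le_div₀ hpmax hfσ hm hmass
end
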